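/- For a symmetric probability measure x on ℝ̄, lim_{n→∞} (1/n) · log H(x^{⊛n}) = log B(x), where B(x) = ∫ e^{-α/2} x(dα) is the Bhattacharyya functional and x^{⊛n} is the n-fold variable-node convolution. -/

import Mathlib

open MeasureTheory Real Set Filter
open scoped ENNReal NNReal

noncomputable section

/-- Exponential on the extended reals, valued in `ℝ≥0∞` (with `e^{-∞}=0`, `e^{∞}=∞`). -/
def eexp (a : EReal) : ℝ≥0∞ :=
  if a = ⊤ then ⊤ else if a = ⊥ then 0 else ENNReal.ofReal (Real.exp a.toReal)

/-- A finite Borel measure `x` on the extended reals is *symmetric* if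
`x(-E) = ∫_E e^{-α} x(dα)` for every Borel set `E`. -/
def SymmetricM (x : Measure EReal) : Prop :=
  ∀ E : Set EReal, MeasurableSet E →
    x ((fun a : EReal => -a) ⁻¹' E) = ∫⁻ a in E, eexp (-a) ∂x

/-- `tanh(α/2)` extended continuously to the extended reals. -/
def etanh (a : EReal) : ℝ :=
  if a = ⊤ then 1 else if a = ⊥ then -1 else Real.tanh (a.toReal / 2)

/-- The moment functional `M_k(x) = ∫ tanh^{2k}(α/2) x(dα)`. -/
def Mk (k : ℕ) (x : Measure EReal) : ℝ := ∫ a, (etanh a) ^ (2 * k) ∂x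

/-- The entropy integrand `log₂(1+e^{-α})`, with the convention that it vanishes at `±∞`
(symmetric measures put no mass at `-∞`). -/
def entFn (a : EReal) : ℝ :=
  if a = ⊤ then 0 else if a = ⊥ then 0 else Real.logb 2 (1 + Real.exp (-a.toReal))

/-- The entropy functional `H(x) = ∫ log₂(1+e^{-α}) x(dα)`. -/
def Hent (x : Measure EReal) : ℝ := ∫ a, entFn a ∂x

/-- Variable-node convolution `⊛`: pushforward of the product measure under addition. -/
def vconv (x y : Measure EReal) : Measure EReal :=
  Measure.map (fun p : EReal × EReal => p.1 + p.2) (x.prod y)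

/-- Inverse hyperbolic tangent on `ℝ`. -/
def artanh (t : ℝ) : ℝ := Real.log ((1 + t) / (1 - t)) / 2

/-- The check-node combination map `(α₁,α₂) ↦ 2 tanh⁻¹(tanh(α₁/2) tanh(α₂/2))` on `ℝ̄ × ℝ̄`. -/
def boxFn (p : EReal × EReal) : EReal :=
  if etanh p.1 * etanh p.2 = 1 then ⊤
  else if etanh p.1 * etanh p.2 = -1 then ⊥
  else ((2 * _root_.artanh (etanh p.1 * etanh p.2) : ℝ) : EReal)

/-- Check-node convolution `⊞`: pushforward of the product measure under `boxFn`. -/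
def cconv (x y : Measure EReal) : Measure EReal :=
  Measure.map boxFn (x.prod y)

/-- Degradation order: `Degraded x' x` means `x' ⪰ x`, i.e.
`∫ f(|tanh(α/2)|) dx' ≥ ∫ f(|tanh(α/2)|) dx` for all concave non-increasing `f : [0,1] → ℝ`. -/
def Degraded (x' x : Measure EReal) : Prop :=
  ∀ f : ℝ → ℝ, ConcaveOn ℝ (Set.Icc (0:ℝ) 1) f → AntitoneOn f (Set.Icc (0:ℝ) 1) →
    ∫ a, f |etanh a| ∂x ≤ ∫ a, f |etanh a| ∂x'

/-- The coefficients `γ_k = 1/((log 2)·2k·(2k−1))`. -/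
def gam (k : ℕ) : ℝ := 1 / (Real.log 2 * (2 * (k : ℝ)) * (2 * (k : ℝ) - 1))

/-- The entropy distance `d_H(x₁,x₂) = Σ_{k≥1} γ_k |M_k(x₁) − M_k(x₂)|`. -/
def dH (x y : Measure EReal) : ℝ := ∑' k : ℕ, gam (k + 1) * |Mk (k + 1) x - Mk (k + 1) y|

/-- The Bhattacharyya integrand `e^{-α/2}` (vanishing at `±∞`, as symmetric measures put
no mass at `-∞`). -/
def bFn (a : EReal) : ℝ :=
  if a = ⊤ then 0 else if a = ⊥ then 0 else Real.exp (-(a.toReal) / 2)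

/-- The Bhattacharyya functional `B(x) = ∫ e^{-α/2} x(dα)`. -/
def Bhat (x : Measure EReal) : ℝ := ∫ a, bFn a ∂x

/-- `n`-fold variable-node convolution power `x^{⊛n}` (with `x^{⊛0} = Δ_0`). -/
def vpow (x : Measure EReal) : ℕ → Measure EReal
  | 0 => Measure.dirac 0
  | n + 1 => vconv (vpow x n) x


/-! ### Auxiliary material for `stmt16` -/

section Stmt16Aux

lemma measurable_add_ereal : Measurable (fun p : EReal × EReal => p.1 + p.2) := by
  have h : (fun p : EReal × EReal => p.1 + p.2) = fun p =>
      if p.1 = ⊥ ∨ p.2 = ⊥ then ⊥ else if p.1 = ⊤ ∨ p.2 = ⊤ then ⊤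
      else ((p.1.toReal + p.2.toReal : ℝ) : EReal) := by
    funext p; rcases p with ⟨a, b⟩
    induction a using EReal.rec <;> induction b using EReal.rec <;>
      simp [← EReal.coe_add]
  rw [h]
  have hb1 : MeasurableSet {p : EReal × EReal | p.1 = ⊥ ∨ p.2 = ⊥} :=
    (measurable_fst (measurableSet_singleton ⊥)).union
      (measurable_snd (measurableSet_singleton ⊥))
  have ht1 : MeasurableSet {p : EReal × EReal | p.1 = ⊤ ∨ p.2 = ⊤} :=
    (measurable_fst (measurableSet_singleton ⊤)).union
      (measurable_snd (measurableSet_singleton ⊤))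
  exact Measurable.ite hb1 measurable_const <| Measurable.ite ht1 measurable_const <|
    measurable_coe_real_ereal.comp
      ((measurable_fst.ereal_toReal).add (measurable_snd.ereal_toReal))

lemma measurable_neg_ereal : Measurable (fun a : EReal => -a) :=
  continuous_neg.measurable

lemma mset_top : MeasurableSet {a : EReal | a = ⊤} := measurableSet_singleton ⊤
lemma mset_bot : MeasurableSet {a : EReal | a = ⊥} := measurableSet_singleton ⊥

lemma measurable_bFn : Measurable bFn := by
  unfold bFn
  exact Measurable.ite mset_top measurable_const <| Measurable.ite mset_bot measurable_const <|
    (measurable_ereal_toReal.neg.div_const 2).exp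

lemma measurable_entFn : Measurable entFn := by
  unfold entFn
  refine Measurable.ite mset_top measurable_const <| Measurable.ite mset_bot measurable_const ?_
  exact (Real.continuous_exp.measurable.comp measurable_ereal_toReal.neg).const_add 1
    |>.log.div_const (Real.log 2)

lemma measurable_eexp : Measurable eexp := by
  unfold eexp
  exact Measurable.ite mset_top measurable_const <| Measurable.ite mset_bot measurable_const <|
    (measurable_ereal_toReal.exp).ennreal_ofReal

@[simp] lemma bFn_top : bFn ⊤ = 0 := rfl
@[simp] lemma bFn_bot : bFn ⊥ = 0 := rfl
@[simp] lemma bFn_coe (s : ℝ) : bFn (s : EReal) = Real.exp (-s / 2) := by simp [bFn]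
@[simp] lemma entFn_top : entFn ⊤ = 0 := rfl
@[simp] lemma entFn_bot : entFn ⊥ = 0 := rfl
@[simp] lemma entFn_coe (s : ℝ) : entFn (s : EReal) = Real.logb 2 (1 + Real.exp (-s)) := by
  simp [entFn]
@[simp] lemma eexp_top : eexp ⊤ = ⊤ := rfl
@[simp] lemma eexp_bot : eexp ⊥ = 0 := rfl
@[simp] lemma eexp_coe (s : ℝ) : eexp (s : EReal) = ENNReal.ofReal (Real.exp s) := by
  simp [eexp]

lemma bFn_nonneg (a : EReal) : 0 ≤ bFn a := by
  induction a using EReal.rec <;> simp [Real.exp_nonneg]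

lemma entFn_nonneg (a : EReal) : 0 ≤ entFn a := by
  induction a using EReal.rec <;> simp
  case coe s =>
    apply Real.logb_nonneg one_lt_two
    nlinarith [Real.exp_nonneg (-s)]

lemma bFn_add (a b : EReal) : bFn (a + b) = bFn a * bFn b := by
  induction a using EReal.rec <;> induction b using EReal.rec <;>
    simp [← EReal.coe_add, ← Real.exp_add]
  case coe.coe s t => ring_nf

lemma max_identity (s t : ℝ) :
    (s+t)^2 + (2*(max s 0 * max (-t) 0) + 2*(max (-s) 0 * max t 0)) =
    (s^2 + t^2) + (2*(max s 0 * max t 0) + 2*(max (-s) 0 * max (-t) 0)) := by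
  rcases le_total 0 s with hs | hs <;> rcases le_total 0 t with ht | ht
  · rw [max_eq_left hs, max_eq_left ht, max_eq_right (neg_nonpos.mpr hs),
      max_eq_right (neg_nonpos.mpr ht)]; ring
  · rw [max_eq_left hs, max_eq_right ht, max_eq_right (neg_nonpos.mpr hs),
      max_eq_left (by linarith : (0:ℝ) ≤ -t)]; ring
  · rw [max_eq_right hs, max_eq_left ht, max_eq_left (by linarith : (0:ℝ) ≤ -s),
      max_eq_right (neg_nonpos.mpr ht)]; ring
  · rw [max_eq_right hs, max_eq_right ht, max_eq_left (by linarith : (0:ℝ) ≤ -s),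
      max_eq_left (by linarith : (0:ℝ) ≤ -t)]; ring

lemma logb_ineq_up (t : ℝ) (ht : 0 < t) : Real.logb 2 (1 + t^2) ≤ 3 * t := by
  have h1 : Real.log (1 + t^2) ≤ 2 * t := by
    have e1 : Real.log (1 + t^2) ≤ Real.log ((1+t)^2) := by
      apply Real.log_le_log (by positivity); nlinarith
    have e2 : Real.log ((1+t)^2) = 2 * Real.log (1+t) := by
      rw [Real.log_pow]; push_cast; ring
    have e3 : Real.log (1+t) ≤ t := by
      have := Real.log_le_sub_one_of_pos (show (0:ℝ) < 1 + t by linarith)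
      linarith
    linarith
  have h2 : (0.6931471803 : ℝ) < Real.log 2 := Real.log_two_gt_d9
  rw [Real.logb, div_le_iff₀ (by linarith)]
  nlinarith

lemma logb_ineq_lo (u : ℝ) (h0 : 0 ≤ u) (h1 : u ≤ 1) : u ≤ Real.logb 2 (1 + u) := by
  have hc := (strictConcaveOn_log_Ioi.concaveOn).2 (Set.mem_Ioi.mpr one_pos)
    (Set.mem_Ioi.mpr two_pos) (by linarith : (0:ℝ) ≤ 1 - u) h0 (by ring)
  simp only [smul_eq_mul, Real.log_one, mul_zero, mul_one, zero_add] at hc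
  have harg : 1 - u + u * 2 = 1 + u := by ring
  rw [harg] at hc
  rw [Real.logb, le_div_iff₀ (Real.log_pos one_lt_two)]
  linarith

lemma sq_exp_le16 (s : ℝ) (hs : 0 ≤ s) : s^2 * Real.exp (-s/2) ≤ 16 := by
  have h := Real.add_one_le_exp (s/4)
  have h2 : Real.exp (-s/2) = (Real.exp (s/4))⁻¹^2 := by
    rw [← Real.exp_neg, ← Real.exp_nat_mul]; norm_num; ring_nf
  have hp : (0:ℝ) < Real.exp (s/4) := Real.exp_pos _
  rw [h2, inv_pow, mul_inv_le_iff₀ (by positivity)]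
  nlinarith

lemma lin_exp_le2 (s : ℝ) : max s 0 * Real.exp (-s/2) ≤ 2 := by
  rcases le_total s 0 with h | h
  · rw [max_eq_right h]; simp
  · rw [max_eq_left h]
    have h1 := Real.add_one_le_exp (s/2)
    have h2 : Real.exp (-s/2) = (Real.exp (s/2))⁻¹ := by rw [← Real.exp_neg]; ring_nf
    have hp : (0:ℝ) < Real.exp (s/2) := Real.exp_pos _
    rw [h2, mul_inv_le_iff₀ hp]
    nlinarith

lemma entFn_le_bFn (a : EReal) : entFn a ≤ 3 * bFn a := by
  induction a using EReal.rec <;> simp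
  case coe s =>
    have h : Real.exp (-s) = (Real.exp (-s/2))^2 := by
      rw [← Real.exp_nat_mul]; norm_num; ring_nf
    rw [h]
    exact logb_ineq_up _ (Real.exp_pos _)

lemma entFn_ge (T s : ℝ) (h : |s| ≤ T) :
    Real.exp (-T/2) * Real.exp (-s/2) ≤ Real.logb 2 (1 + Real.exp (-s)) := by
  obtain ⟨hsT1, hsT2⟩ := abs_le.mp h
  rcases le_total 0 s with hs | hs
  · have hu : Real.exp (-s) ≤ 1 := Real.exp_le_one_iff.mpr (by linarith)
    have hlo := logb_ineq_lo (Real.exp (-s)) (Real.exp_pos _).le hu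
    calc Real.exp (-T/2) * Real.exp (-s/2)
        ≤ Real.exp (-s/2) * Real.exp (-s/2) := by
          apply mul_le_mul_of_nonneg_right _ (Real.exp_nonneg _)
          exact Real.exp_le_exp.mpr (by linarith)
      _ = Real.exp (-s) := by rw [← Real.exp_add]; ring_nf
      _ ≤ Real.logb 2 (1 + Real.exp (-s)) := hlo
  · have h2 : (1:ℝ) ≤ Real.logb 2 (1 + Real.exp (-s)) := by
      have h3 : (2:ℝ) ≤ 1 + Real.exp (-s) := by
        have := Real.one_le_exp (by linarith : (0:ℝ) ≤ -s)
        linarith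
      rw [Real.logb, le_div_iff₀ (Real.log_pos one_lt_two), one_mul]
      exact Real.log_le_log two_pos h3
    have h3 : Real.exp (-T/2) * Real.exp (-s/2) ≤ 1 := by
      rw [← Real.exp_add]
      exact Real.exp_le_one_iff.mpr (by linarith)
    linarith

/-- `ℝ≥0∞`-valued integrands. -/
def bE (a : EReal) : ℝ≥0∞ := ENNReal.ofReal (bFn a)
def hE (a : EReal) : ℝ≥0∞ := ENNReal.ofReal (entFn a)
def qE (a : EReal) : ℝ≥0∞ := ENNReal.ofReal (a.toReal^2 * bFn a)
def rpE (a : EReal) : ℝ≥0∞ := ENNReal.ofReal (max a.toReal 0 * bFn a)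
def rnE (a : EReal) : ℝ≥0∞ := ENNReal.ofReal (max (-a.toReal) 0 * bFn a)

lemma measurable_bE : Measurable bE := measurable_bFn.ennreal_ofReal
lemma measurable_hE : Measurable hE := measurable_entFn.ennreal_ofReal
lemma measurable_qE : Measurable qE :=
  (((measurable_ereal_toReal.pow_const 2)).mul measurable_bFn).ennreal_ofReal
lemma measurable_rpE : Measurable rpE :=
  ((measurable_ereal_toReal.max measurable_const).mul measurable_bFn).ennreal_ofReal
lemma measurable_rnE : Measurable rnE :=
  ((measurable_ereal_toReal.neg.max measurable_const).mul measurable_bFn).ennreal_ofReal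

lemma bE_mul (a b : EReal) : bE (a + b) = bE a * bE b := by
  rw [bE, bE, bE, bFn_add, ENNReal.ofReal_mul (bFn_nonneg a)]

lemma qE_eq (a : EReal) : qE a = ENNReal.ofReal (a.toReal^2) * bE a :=
  ENNReal.ofReal_mul (sq_nonneg _)
lemma rpE_eq (a : EReal) : rpE a = ENNReal.ofReal (max a.toReal 0) * bE a :=
  ENNReal.ofReal_mul (le_max_right _ _)
lemma rnE_eq (a : EReal) : rnE a = ENNReal.ofReal (max (-a.toReal) 0) * bE a :=
  ENNReal.ofReal_mul (le_max_right _ _)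

lemma eexp_neg_mul_bE_neg (a : EReal) : eexp (-a) * bE (-a) = bE a := by
  induction a using EReal.rec
  case bot => simp [bE]
  case top => simp [bE]
  case coe s =>
    rw [← EReal.coe_neg]
    simp only [eexp_coe, bE, bFn_coe]
    rw [← ENNReal.ofReal_mul (Real.exp_nonneg _), ← Real.exp_add]
    norm_num
    ring_nf

lemma ofReal_combo {w a1 a2 b1 b2 p1 n1 p2 n2 : ℝ}
    (hw : 0 ≤ w) (ha1 : 0 ≤ a1) (ha2 : 0 ≤ a2) (hb1 : 0 ≤ b1) (hb2 : 0 ≤ b2)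
    (hp1 : 0 ≤ p1) (hn1 : 0 ≤ n1) (hp2 : 0 ≤ p2) (hn2 : 0 ≤ n2)
    (h : w + (2*(p1*n2) + 2*(n1*p2)) = (a1*a2 + b1*b2) + (2*(p1*p2) + 2*(n1*n2))) :
    ENNReal.ofReal w + (2*(ENNReal.ofReal p1 * ENNReal.ofReal n2)
        + 2*(ENNReal.ofReal n1 * ENNReal.ofReal p2)) =
    (ENNReal.ofReal a1 * ENNReal.ofReal a2 + ENNReal.ofReal b1 * ENNReal.ofReal b2)
        + (2*(ENNReal.ofReal p1 * ENNReal.ofReal p2)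
        + 2*(ENNReal.ofReal n1 * ENNReal.ofReal n2)) := by
  have h2 : (0:ℝ) ≤ 2 := by norm_num
  rw [← ENNReal.ofReal_mul hp1, ← ENNReal.ofReal_mul hp1, ← ENNReal.ofReal_mul hn1,
    ← ENNReal.ofReal_mul hn1, ← ENNReal.ofReal_mul ha1, ← ENNReal.ofReal_mul hb1,
    show (2:ℝ≥0∞) = ENNReal.ofReal 2 by norm_num,
    ← ENNReal.ofReal_mul h2, ← ENNReal.ofReal_mul h2, ← ENNReal.ofReal_mul h2,
    ← ENNReal.ofReal_mul h2,
    ← ENNReal.ofReal_add (by positivity) (by positivity),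
    ← ENNReal.ofReal_add hw (by positivity),
    ← ENNReal.ofReal_add (by positivity) (by positivity),
    ← ENNReal.ofReal_add (by positivity) (by positivity),
    ← ENNReal.ofReal_add (by positivity) (by positivity)]
  exact congrArg ENNReal.ofReal h

/-- The key pointwise identity used for the variance recursion. -/
lemma key_identity (a b : EReal) :
    qE (a + b) + (2*(rpE a * rnE b) + 2*(rnE a * rpE b)) =
    (qE a * bE b + bE a * qE b) + (2*(rpE a * rpE b) + 2*(rnE a * rnE b)) := by
  induction a using EReal.rec <;> induction b using EReal.rec <;>
    try simp [qE, rpE, rnE, bE]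
  case coe.coe s t =>
    rw [← EReal.coe_add]
    simp only [qE, rpE, rnE, bE, bFn_coe, EReal.toReal_coe]
    set E := Real.exp (-s/2) with hE'
    set F := Real.exp (-t/2) with hF'
    have hEF : Real.exp (-(s+t)/2) = E * F := by rw [hE', hF', ← Real.exp_add]; ring_nf
    have hEpos : (0:ℝ) ≤ E := Real.exp_nonneg _
    have hFpos : (0:ℝ) ≤ F := Real.exp_nonneg _
    have hsp : (0:ℝ) ≤ max s 0 := le_max_right _ _
    have hsn : (0:ℝ) ≤ max (-s) 0 := le_max_right _ _
    have htp : (0:ℝ) ≤ max t 0 := le_max_right _ _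
    have htn : (0:ℝ) ≤ max (-t) 0 := le_max_right _ _
    rw [hEF]
    have hm : ∀ r : ℝ, ENNReal.ofReal r = ENNReal.ofReal (max r 0) := fun r => by
      rcases le_total r 0 with h | h
      · rw [max_eq_right h, ENNReal.ofReal_of_nonpos h, ENNReal.ofReal_zero]
      · rw [max_eq_left h]
    rw [hm s, hm (-s), hm t, hm (-t), ← ENNReal.ofReal_mul hsp, ← ENNReal.ofReal_mul hsn,
      ← ENNReal.ofReal_mul htp, ← ENNReal.ofReal_mul htn]
    exact ofReal_combo (by positivity) (by positivity) hFpos hEpos (by positivity)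
      (by positivity) (by positivity) (by positivity) (by positivity)
      (by linear_combination (E * F) * max_identity s t)

lemma hE_le (a : EReal) : hE a ≤ 3 * bE a := by
  rw [hE, bE, show (3:ℝ≥0∞) = ENNReal.ofReal 3 by norm_num,
    ← ENNReal.ofReal_mul (by norm_num)]
  exact ENNReal.ofReal_le_ofReal (entFn_le_bFn a)

lemma rpE_le_two (a : EReal) : rpE a ≤ 2 := by
  rw [rpE, show (2:ℝ≥0∞) = ENNReal.ofReal 2 by norm_num]
  apply ENNReal.ofReal_le_ofReal
  induction a using EReal.rec <;> simp [lin_exp_le2]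

lemma rnE_le (a : EReal) : rnE a ≤ bE a + qE a := by
  rw [rnE, bE, qE, ← ENNReal.ofReal_add (bFn_nonneg a) (mul_nonneg (sq_nonneg _) (bFn_nonneg a))]
  apply ENNReal.ofReal_le_ofReal
  have h : max (-a.toReal) 0 ≤ 1 + a.toReal^2 := by
    rcases le_total (-a.toReal) 0 with h | h
    · rw [max_eq_right h]; positivity
    · rw [max_eq_left h]; nlinarith [sq_nonneg (1 + a.toReal)]
  calc max (-a.toReal) 0 * bFn a ≤ (1 + a.toReal^2) * bFn a :=
        mul_le_mul_of_nonneg_right h (bFn_nonneg a)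
    _ = bFn a + a.toReal^2 * bFn a := by ring

lemma bE_le_one {a : EReal} (h : 0 ≤ a) : bE a ≤ 1 := by
  rw [bE, show (1:ℝ≥0∞) = ENNReal.ofReal 1 by norm_num]
  apply ENNReal.ofReal_le_ofReal
  induction a using EReal.rec
  case bot => simp
  case top => simp
  case coe s =>
    have hs : (0:ℝ) ≤ s := EReal.coe_nonneg.mp h
    simp only [bFn_coe]
    exact Real.exp_le_one_iff.mpr (by linarith)

lemma qE_le_16 {a : EReal} (h : 0 ≤ a) : qE a ≤ 16 := by
  rw [qE, show (16:ℝ≥0∞) = ENNReal.ofReal 16 by norm_num]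
  apply ENNReal.ofReal_le_ofReal
  induction a using EReal.rec
  case bot => simp
  case top => simp
  case coe s =>
    have hs : (0:ℝ) ≤ s := EReal.coe_nonneg.mp h
    simp only [bFn_coe, EReal.toReal_coe]
    exact sq_exp_le16 s hs

end Stmt16Aux


section Stmt16Measure

variable {x : Measure EReal}

lemma vpow_prob (x : Measure EReal) [IsProbabilityMeasure x] (n : ℕ) :
    IsProbabilityMeasure (vpow x n) := by
  induction n with
  | zero => rw [vpow]; infer_instance
  | succ n ih =>
    rw [vpow, vconv]
    haveI := ih
    exact Measure.isProbabilityMeasure_map measurable_add_ereal.aemeasurable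

lemma lint_vconv {y z : Measure EReal} [SFinite y] [SFinite z] {g : EReal → ℝ≥0∞}
    (hg : Measurable g) :
    ∫⁻ a, g a ∂(vconv y z) = ∫⁻ p : EReal × EReal, g (p.1 + p.2) ∂(y.prod z) :=
  lintegral_map hg measurable_add_ereal

lemma sym_map (hx : SymmetricM x) :
    Measure.map (fun a : EReal => -a) x = x.withDensity (fun a => eexp (-a)) := by
  apply Measure.ext
  intro E hE2
  rw [Measure.map_apply measurable_neg_ereal hE2, withDensity_apply _ hE2]
  exact hx E hE2

lemma sym_pair (hx : SymmetricM x) {g : EReal → ℝ≥0∞} (hg : Measurable g) :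
    ∫⁻ a, g (-a) * bE a ∂x = ∫⁻ a, g a * bE a ∂x := by
  have hG : Measurable fun a : EReal => g a * bE (-a) :=
    hg.mul (measurable_bE.comp measurable_neg_ereal)
  have h2 := lintegral_map hG measurable_neg_ereal (μ := x)
  rw [sym_map hx, lintegral_withDensity_eq_lintegral_mul _
    (show Measurable fun a : EReal => eexp (-a) from
      measurable_eexp.comp measurable_neg_ereal) hG] at h2
  simp only [Pi.mul_apply, neg_neg] at h2
  calc ∫⁻ a, g (-a) * bE a ∂x = ∫⁻ a, eexp (-a) * (g a * bE (-a)) ∂x := h2.symm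
    _ = ∫⁻ a, g a * bE a ∂x := by
        congr 1; funext a
        rw [mul_left_comm, eexp_neg_mul_bE_neg]

lemma ind_mul_lint {s : Set EReal} (hs : MeasurableSet s) {F : EReal → ℝ≥0∞} :
    ∫⁻ a, s.indicator (fun _ => 1) a * F a ∂x = ∫⁻ a in s, F a ∂x := by
  rw [← lintegral_indicator hs]
  congr 1; funext a; by_cases ha : a ∈ s <;> simp [ha]

lemma flip_lint (hx : SymmetricM x) {g : EReal → ℝ≥0∞} (hg : Measurable g)
    (hsym : ∀ a : EReal, g (-a) = g a) :
    ∫⁻ a in {a : EReal | a < 0}, g a * bE a ∂x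
      = ∫⁻ a in {a : EReal | 0 < a}, g a * bE a ∂x := by
  have hms : MeasurableSet {a : EReal | a < 0} :=
    measurableSet_lt measurable_id measurable_const
  have hms2 : MeasurableSet {a : EReal | 0 < a} :=
    measurableSet_lt measurable_const measurable_id
  have hneg0 : ∀ a : EReal, (-a < 0) ↔ (0 < a) := by
    intro a
    rw [show (0:EReal) = -0 by simp, EReal.neg_lt_neg_iff]
    simp
  have h := sym_pair hx (g := fun a => {a : EReal | a < 0}.indicator (fun _ => 1) a * g a)
    ((measurable_const.indicator hms).mul hg)
  beta_reduce at h
  have hL : ∫⁻ a, {a : EReal | a < 0}.indicator (fun _ => (1:ℝ≥0∞)) (-a) * g (-a) * bE a ∂x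
      = ∫⁻ a in {a : EReal | 0 < a}, g a * bE a ∂x := by
    rw [← ind_mul_lint hms2]
    congr 1; funext a
    have hi : {a : EReal | a < 0}.indicator (fun _ => (1:ℝ≥0∞)) (-a)
        = {a : EReal | 0 < a}.indicator (fun _ => 1) a := by
      by_cases ha : 0 < a <;> simp [Set.indicator_apply, hneg0, ha]
    rw [hi, hsym a, mul_assoc]
  have hR : ∫⁻ a, {a : EReal | a < 0}.indicator (fun _ => (1:ℝ≥0∞)) a * g a * bE a ∂x
      = ∫⁻ a in {a : EReal | a < 0}, g a * bE a ∂x := by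
    rw [← ind_mul_lint hms]
    congr 1; funext a
    rw [mul_assoc]
  rw [← hL, ← hR]
  exact h.symm

lemma beta_le_two [IsProbabilityMeasure x] (hx : SymmetricM x) : ∫⁻ a, bE a ∂x ≤ 2 := by
  have hms : MeasurableSet {a : EReal | a < 0} :=
    measurableSet_lt measurable_id measurable_const
  rw [← lintegral_add_compl (fun a => bE a) hms]
  have h1 : ∫⁻ a in {a : EReal | a < 0}, bE a ∂x ≤ 1 := by
    have hfl := flip_lint hx (g := fun _ => 1) measurable_const (fun _ => rfl)
    simp only [one_mul] at hfl
    rw [hfl]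
    calc ∫⁻ a in {a : EReal | 0 < a}, bE a ∂x ≤ ∫⁻ _ in {a : EReal | 0 < a}, 1 ∂x :=
          setLIntegral_mono measurable_const (fun a ha => bE_le_one (le_of_lt ha))
      _ = x {a : EReal | 0 < a} := setLIntegral_one _
      _ ≤ 1 := prob_le_one
  have h2 : ∫⁻ a in {a : EReal | a < 0}ᶜ, bE a ∂x ≤ 1 := by
    calc ∫⁻ a in {a : EReal | a < 0}ᶜ, bE a ∂x ≤ ∫⁻ _ in {a : EReal | a < 0}ᶜ, 1 ∂x :=
          setLIntegral_mono measurable_const (fun a ha => bE_le_one (not_lt.mp ha))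
      _ = x {a : EReal | a < 0}ᶜ := setLIntegral_one _
      _ ≤ 1 := prob_le_one
  calc ∫⁻ a in {a : EReal | a < 0}, bE a ∂x + ∫⁻ a in {a : EReal | a < 0}ᶜ, bE a ∂x
      ≤ 1 + 1 := add_le_add h1 h2
    _ = 2 := by norm_num

lemma V1_le_32 [IsProbabilityMeasure x] (hx : SymmetricM x) : ∫⁻ a, qE a ∂x ≤ 32 := by
  have hms : MeasurableSet {a : EReal | a < 0} :=
    measurableSet_lt measurable_id measurable_const
  have hq : ∀ a : EReal, qE a = ENNReal.ofReal (a.toReal^2) * bE a := qE_eq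
  have hqm : Measurable fun a : EReal => ENNReal.ofReal (a.toReal^2) :=
    (measurable_ereal_toReal.pow_const 2).ennreal_ofReal
  rw [← lintegral_add_compl (fun a => qE a) hms]
  have h1 : ∫⁻ a in {a : EReal | a < 0}, qE a ∂x ≤ 16 := by
    have hfl := flip_lint hx (g := fun a => ENNReal.ofReal (a.toReal^2)) hqm
      (fun a => by simp [EReal.toReal_neg, neg_sq])
    simp only [← hq] at hfl
    rw [hfl]
    calc ∫⁻ a in {a : EReal | 0 < a}, qE a ∂x ≤ ∫⁻ _ in {a : EReal | 0 < a}, 16 ∂x :=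
          setLIntegral_mono measurable_const (fun a ha => qE_le_16 (le_of_lt ha))
      _ = 16 * x {a : EReal | 0 < a} := setLIntegral_const _ _
      _ ≤ 16 * 1 := by gcongr; exact prob_le_one
      _ = 16 := by norm_num
  have h2 : ∫⁻ a in {a : EReal | a < 0}ᶜ, qE a ∂x ≤ 16 := by
    calc ∫⁻ a in {a : EReal | a < 0}ᶜ, qE a ∂x ≤ ∫⁻ _ in {a : EReal | a < 0}ᶜ, 16 ∂x :=
          setLIntegral_mono measurable_const (fun a ha => qE_le_16 (not_lt.mp ha))
      _ = 16 * x {a : EReal | a < 0}ᶜ := setLIntegral_const _ _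
      _ ≤ 16 * 1 := by gcongr; exact prob_le_one
      _ = 16 := by norm_num
  calc ∫⁻ a in {a : EReal | a < 0}, qE a ∂x + ∫⁻ a in {a : EReal | a < 0}ᶜ, qE a ∂x
      ≤ 16 + 16 := add_le_add h1 h2
    _ = 32 := by norm_num

lemma P1_eq_N1 (hx : SymmetricM x) : ∫⁻ a, rpE a ∂x = ∫⁻ a, rnE a ∂x := by
  have hgm : Measurable fun a : EReal => ENNReal.ofReal (max a.toReal 0) :=
    (measurable_ereal_toReal.max measurable_const).ennreal_ofReal
  have h := sym_pair hx (g := fun a => ENNReal.ofReal (max a.toReal 0)) hgm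
  calc ∫⁻ a, rpE a ∂x = ∫⁻ a, ENNReal.ofReal (max a.toReal 0) * bE a ∂x := by
        congr 1; funext a; exact rpE_eq a
    _ = ∫⁻ a, ENNReal.ofReal (max (-a).toReal 0) * bE a ∂x := h.symm
    _ = ∫⁻ a, rnE a ∂x := by
        congr 1; funext a
        rw [EReal.toReal_neg_eq, ← rnE_eq]

lemma bFn_zero : bFn 0 = 1 := by
  rw [show (0:EReal) = ((0:ℝ):EReal) by simp, bFn_coe]
  norm_num

lemma beta_pow (x : Measure EReal) [IsProbabilityMeasure x] (n : ℕ) :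
    ∫⁻ a, bE a ∂(vpow x n) = (∫⁻ a, bE a ∂x)^n := by
  induction n with
  | zero =>
    rw [vpow, lintegral_dirac, pow_zero, bE, bFn_zero]
    norm_num
  | succ n ih =>
    haveI := vpow_prob x n
    rw [vpow, lint_vconv measurable_bE]
    calc ∫⁻ p : EReal × EReal, bE (p.1 + p.2) ∂((vpow x n).prod x)
        = ∫⁻ p : EReal × EReal, bE p.1 * bE p.2 ∂((vpow x n).prod x) := by
          congr 1; funext p; exact bE_mul p.1 p.2
      _ = (∫⁻ a, bE a ∂(vpow x n)) * (∫⁻ a, bE a ∂x) :=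
          lintegral_prod_mul measurable_bE.aemeasurable measurable_bE.aemeasurable
      _ = (∫⁻ a, bE a ∂x)^(n+1) := by rw [ih, pow_succ]

end Stmt16Measure


section Stmt16Rec

lemma A_bound (x : Measure EReal) [IsProbabilityMeasure x] (hx : SymmetricM x) (n : ℕ) :
    ∫⁻ a, qE a ∂(vpow x n) ≤ n * (∫⁻ a, qE a ∂x) * (∫⁻ a, bE a ∂x)^(n-1) := by
  have hβ2 : (∫⁻ a, bE a ∂x) ≤ 2 := beta_le_two hx
  have hV : (∫⁻ a, qE a ∂x) ≤ 32 := V1_le_32 hx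
  have hVfin : (∫⁻ a, qE a ∂x) ≠ ∞ := (lt_of_le_of_lt hV (by norm_num)).ne
  have hβfin : (∫⁻ a, bE a ∂x) ≠ ∞ := (lt_of_le_of_lt hβ2 (by norm_num)).ne
  set β := ∫⁻ a, bE a ∂x with hβdef
  set V := ∫⁻ a, qE a ∂x with hVdef
  induction n with
  | zero =>
    rw [vpow, lintegral_dirac]
    simp [qE]
  | succ n ih =>
    haveI := vpow_prob x n
    set μ := vpow x n with hμdef
    set A := ∫⁻ a, qE a ∂μ with hAdef
    set P := ∫⁻ a, rpE a ∂μ with hPdef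
    set N := ∫⁻ a, rnE a ∂μ with hNdef
    set m := ∫⁻ a, rpE a ∂x with hmdef
    have hbound : (n:ℝ≥0∞) * V * β^(n-1) ≠ ∞ := by
      apply ENNReal.mul_ne_top
      apply ENNReal.mul_ne_top (ENNReal.natCast_ne_top n) hVfin
      exact (ENNReal.pow_ne_top hβfin)
    have hAfin : A ≠ ∞ := (lt_of_le_of_lt ih hbound.lt_top).ne
    have hm2 : m ≤ 2 := by
      calc m ≤ ∫⁻ _, 2 ∂x := lintegral_mono rpE_le_two
        _ = 2 := by simp
    have hmfin : m ≠ ∞ := (lt_of_le_of_lt hm2 (by norm_num)).ne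
    have hP2 : P ≤ 2 := by
      calc P ≤ ∫⁻ _, 2 ∂μ := lintegral_mono rpE_le_two
        _ = 2 := by simp
    have hPfin : P ≠ ∞ := (lt_of_le_of_lt hP2 (by norm_num)).ne
    have hβn : ∫⁻ a, bE a ∂μ = β^n := beta_pow x n
    have hβnfin : β^n ≠ ∞ := ENNReal.pow_ne_top hβfin
    have hN : N ≤ β^n + A := by
      calc N ≤ ∫⁻ a, (bE a + qE a) ∂μ := lintegral_mono rnE_le
        _ = β^n + A := by rw [lintegral_add_left measurable_bE, hβn]
    have hNfin : N ≠ ∞ :=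
      (lt_of_le_of_lt hN (lt_of_lt_of_le (lt_top_iff_ne_top.mpr
        (ENNReal.add_ne_top.mpr ⟨hβnfin, hAfin⟩)) le_rfl)).ne
    -- measurable pieces on the product
    have m1 : Measurable fun p : EReal × EReal => qE (p.1 + p.2) :=
      measurable_qE.comp measurable_add_ereal
    have mpn : Measurable fun p : EReal × EReal => rpE p.1 * rnE p.2 :=
      (measurable_rpE.comp measurable_fst).mul (measurable_rnE.comp measurable_snd)
    have mnp : Measurable fun p : EReal × EReal => rnE p.1 * rpE p.2 :=
      (measurable_rnE.comp measurable_fst).mul (measurable_rpE.comp measurable_snd)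
    have mpp : Measurable fun p : EReal × EReal => rpE p.1 * rpE p.2 :=
      (measurable_rpE.comp measurable_fst).mul (measurable_rpE.comp measurable_snd)
    have mnn : Measurable fun p : EReal × EReal => rnE p.1 * rnE p.2 :=
      (measurable_rnE.comp measurable_fst).mul (measurable_rnE.comp measurable_snd)
    have mqb : Measurable fun p : EReal × EReal => qE p.1 * bE p.2 :=
      (measurable_qE.comp measurable_fst).mul (measurable_bE.comp measurable_snd)
    have mbq : Measurable fun p : EReal × EReal => bE p.1 * qE p.2 :=
      (measurable_bE.comp measurable_fst).mul (measurable_qE.comp measurable_snd)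
    have e1 : ∫⁻ a, qE a ∂(vpow x (n+1)) = ∫⁻ p : EReal × EReal, qE (p.1 + p.2) ∂(μ.prod x) := by
      rw [vpow]; exact lint_vconv measurable_qE
    have e2 : ∫⁻ p : EReal × EReal,
          (qE (p.1+p.2) + (2*(rpE p.1 * rnE p.2) + 2*(rnE p.1 * rpE p.2))) ∂(μ.prod x)
        = ∫⁻ p : EReal × EReal,
          ((qE p.1 * bE p.2 + bE p.1 * qE p.2)
            + (2*(rpE p.1 * rpE p.2) + 2*(rnE p.1 * rnE p.2))) ∂(μ.prod x) := by
      congr 1; funext p; exact key_identity p.1 p.2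
    have hfl : ∫⁻ p : EReal × EReal,
          (qE (p.1+p.2) + (2*(rpE p.1 * rnE p.2) + 2*(rnE p.1 * rpE p.2))) ∂(μ.prod x)
        = (∫⁻ a, qE a ∂(vpow x (n+1))) + (2*(P * m) + 2*(N * m)) := by
      rw [lintegral_add_left m1, lintegral_add_left (f := fun p : EReal × EReal => 2 * (rpE p.1 * rnE p.2)) (measurable_const.mul mpn),
        lintegral_const_mul 2 mpn, lintegral_const_mul 2 mnp,
        lintegral_prod_mul measurable_rpE.aemeasurable measurable_rnE.aemeasurable,
        lintegral_prod_mul measurable_rnE.aemeasurable measurable_rpE.aemeasurable,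
        ← e1, ← P1_eq_N1 hx]
    have hfr : ∫⁻ p : EReal × EReal,
          ((qE p.1 * bE p.2 + bE p.1 * qE p.2)
            + (2*(rpE p.1 * rpE p.2) + 2*(rnE p.1 * rnE p.2))) ∂(μ.prod x)
        = (A * β + β^n * V) + (2*(P * m) + 2*(N * m)) := by
      rw [lintegral_add_left (f := fun p : EReal × EReal => qE p.1 * bE p.2 + bE p.1 * qE p.2) (mqb.add mbq), lintegral_add_left mqb,
        lintegral_add_left (f := fun p : EReal × EReal => 2 * (rpE p.1 * rpE p.2)) (measurable_const.mul mpp),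
        lintegral_const_mul 2 mpp, lintegral_const_mul 2 mnn,
        lintegral_prod_mul measurable_qE.aemeasurable measurable_bE.aemeasurable,
        lintegral_prod_mul measurable_bE.aemeasurable measurable_qE.aemeasurable,
        lintegral_prod_mul measurable_rpE.aemeasurable measurable_rpE.aemeasurable,
        lintegral_prod_mul measurable_rnE.aemeasurable measurable_rnE.aemeasurable,
        hβn, ← P1_eq_N1 hx]
    have hC : (2*(P * m) + 2*(N * m)) ≠ ∞ := by
      apply ENNReal.add_ne_top.mpr
      constructor
      · exact ENNReal.mul_ne_top (by norm_num) (ENNReal.mul_ne_top hPfin hmfin)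
      · exact ENNReal.mul_ne_top (by norm_num) (ENNReal.mul_ne_top hNfin hmfin)
    have hrec : ∫⁻ a, qE a ∂(vpow x (n+1)) = A * β + β^n * V := by
      rw [← ENNReal.add_left_inj hC, ← hfl, ← hfr]
      exact e2
    rw [hrec]
    rcases Nat.eq_zero_or_pos n with hn0 | hnpos
    · subst hn0
      have hA0 : A ≤ 0 := by simpa using ih
      have : A = 0 := le_antisymm hA0 zero_le
      rw [this]
      simp
    · have hsucc : n - 1 + 1 = n := Nat.succ_pred_eq_of_pos hnpos
      calc A * β + β^n * V ≤ ((n:ℝ≥0∞) * V * β^(n-1)) * β + β^n * V := by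
            gcongr
        _ = (n:ℝ≥0∞) * V * β^n + V * β^n := by
            rw [mul_assoc ((n:ℝ≥0∞) * V), ← pow_succ, hsucc]; ring
        _ = ((n:ℝ≥0∞) + 1) * V * β^n := by ring
        _ = ((n+1:ℕ):ℝ≥0∞) * V * β^((n+1)-1) := by
            push_cast; simp
    
end Stmt16Rec


section Stmt16Final

lemma Hent_eq_lint (y : Measure EReal) : Hent y = (∫⁻ a, hE a ∂y).toReal := by
  rw [Hent, integral_eq_lintegral_of_nonneg_ae (ae_of_all _ entFn_nonneg)
    measurable_entFn.aestronglyMeasurable]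
  rfl

lemma Bhat_eq_lint (y : Measure EReal) : Bhat y = (∫⁻ a, bE a ∂y).toReal := by
  rw [Bhat, integral_eq_lintegral_of_nonneg_ae (ae_of_all _ bFn_nonneg)
    measurable_bFn.aestronglyMeasurable]
  rfl

lemma hE_lint_le (x : Measure EReal) [IsProbabilityMeasure x] (n : ℕ) :
    (∫⁻ a, hE a ∂(vpow x n)) ≤ 3 * (∫⁻ a, bE a ∂x)^n := by
  haveI := vpow_prob x n
  calc ∫⁻ a, hE a ∂(vpow x n) ≤ ∫⁻ a, 3 * bE a ∂(vpow x n) := lintegral_mono hE_le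
    _ = 3 * ∫⁻ a, bE a ∂(vpow x n) := lintegral_const_mul 3 measurable_bE
    _ = 3 * (∫⁻ a, bE a ∂x)^n := by rw [beta_pow]

lemma sqrt_div_nat_tendsto : Tendsto (fun n : ℕ => Real.sqrt n / n) atTop (nhds 0) := by
  have hsq : Tendsto (fun n : ℕ => Real.sqrt n) atTop atTop := by
    refine tendsto_atTop.mpr fun c => ?_
    filter_upwards [eventually_ge_atTop (⌈c^2⌉₊)] with n hn
    rcases le_total c 0 with hc | hc
    · exact le_trans hc (Real.sqrt_nonneg _)
    · have h1 : c^2 ≤ (n:ℝ) := le_trans (Nat.le_ceil _) (by exact_mod_cast hn)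
      calc c = Real.sqrt (c^2) := (Real.sqrt_sq hc).symm
        _ ≤ Real.sqrt n := Real.sqrt_le_sqrt h1
  have hinv := hsq.inv_tendsto_atTop
  apply hinv.congr'
  filter_upwards [eventually_ge_atTop 1] with n hn
  have hn0 : (0:ℝ) < n := by exact_mod_cast hn
  have hs0 : Real.sqrt n ≠ 0 := by positivity
  simp only [Pi.inv_apply]
  have h : Real.sqrt n * Real.sqrt n = (n:ℝ) := Real.mul_self_sqrt hn0.le
  field_simp
  rw [sq, h]

end Stmt16Final


/-- For a symmetric probability measure `x`,
`lim_{n→∞} (1/n) log H(x^{⊛n}) = log B(x)`, where `B` is the Bhattacharyya functional. -/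
theorem stmt16 (x : Measure EReal) [IsProbabilityMeasure x] (hx : SymmetricM x) :
    Tendsto (fun n : ℕ => (1 / (n : ℝ)) * Real.log (Hent (vpow x n)))
      atTop (nhds (Real.log (Bhat x))) := by
  have hβ2 : (∫⁻ a, bE a ∂x) ≤ 2 := beta_le_two hx
  have hβfin : (∫⁻ a, bE a ∂x) ≠ ∞ := (lt_of_le_of_lt hβ2 (by norm_num)).ne
  set β := ∫⁻ a, bE a ∂x with hβdef
  set b := β.toReal with hbdef
  have hB : Bhat x = b := Bhat_eq_lint x
  by_cases hb0 : β = 0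
  · -- degenerate case `B = 0`
    have hBx : Bhat x = 0 := by rw [hB, hbdef, hb0]; simp
    rw [hBx, Real.log_zero]
    have h0 : Tendsto (fun _ : ℕ => (0:ℝ)) atTop (nhds 0) := tendsto_const_nhds
    apply Tendsto.congr' _ h0
    filter_upwards [eventually_ge_atTop 1] with n hn
    have h1 : (∫⁻ a, hE a ∂(vpow x n)) = 0 := by
      have h2 := hE_lint_le x n
      rw [← hβdef, hb0, zero_pow (by omega : n ≠ 0), mul_zero] at h2
      exact le_antisymm h2 zero_le
    rw [Hent_eq_lint, h1]
    simp
  · -- main case `B > 0`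
    have hbpos : 0 < b := ENNReal.toReal_pos hb0 hβfin
    have hβb : β = ENNReal.ofReal b := (ENNReal.ofReal_toReal hβfin).symm
    set T : ℕ → ℝ := fun n => Real.sqrt (64 * n / b) with hTdef
    -- lower bound on the entropy lintegral
    have hlow : ∀ n : ℕ, 1 ≤ n →
        ENNReal.ofReal (Real.exp (-(T n)/2) * (b^n/2)) ≤ ∫⁻ a, hE a ∂(vpow x n) := by
      intro n hn
      haveI := vpow_prob x n
      have hnR : (0:ℝ) < n := by exact_mod_cast hn
      have hT0 : 0 < T n := Real.sqrt_pos.mpr (by positivity)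
      have hTsq : T n ^ 2 = 64 * n / b := Real.sq_sqrt (by positivity)
      set μ := vpow x n with hμdef
      set S : Set EReal := {a : EReal | a ≠ ⊤ ∧ a ≠ ⊥ ∧ |a.toReal| ≤ T n} with hSdef
      have hSm : MeasurableSet S := by
        apply MeasurableSet.inter (mset_top.compl)
        exact MeasurableSet.inter (mset_bot.compl)
          (measurableSet_le measurable_ereal_toReal.abs measurable_const)
      have hβn : ∫⁻ a, bE a ∂μ = β^n := beta_pow x n
      -- the complement contributes at most half of `β^n`
      have hSc : ∫⁻ a in Sᶜ, bE a ∂μ ≤ β^n / 2 := by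
        have hpt : ∀ a ∈ Sᶜ, bE a ≤ ENNReal.ofReal (b/(64*n)) * qE a := by
          intro a ha
          by_cases htop : a = ⊤
          · subst htop; simp [bE]
          by_cases hbot : a = ⊥
          · subst hbot; simp [bE]
          have habs : ¬ |a.toReal| ≤ T n := by
            simp only [hSdef, Set.mem_compl_iff, Set.mem_setOf_eq, not_and_or] at ha
            tauto
          push_neg at habs
          have hTs : T n ^ 2 ≤ a.toReal ^ 2 := by
            calc T n ^2 ≤ |a.toReal|^2 := pow_le_pow_left₀ hT0.le habs.le 2
              _ = a.toReal^2 := sq_abs _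
          have hreal : bFn a ≤ b/(64*n) * (a.toReal^2 * bFn a) := by
            have hb1 : 0 ≤ bFn a := bFn_nonneg a
            have h64 : b / (64*n) = 1 / T n ^2 := by rw [hTsq, one_div_div]
            rw [h64, div_mul_eq_mul_div, le_div_iff₀ (by positivity)]
            nlinarith
          calc bE a = ENNReal.ofReal (bFn a) := rfl
            _ ≤ ENNReal.ofReal (b/(64*n) * (a.toReal^2 * bFn a)) :=
                ENNReal.ofReal_le_ofReal hreal
            _ = ENNReal.ofReal (b/(64*n)) * qE a := by
                rw [ENNReal.ofReal_mul (by positivity)]; rfl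
        have hcontrol : ENNReal.ofReal (b/(64*n)) * ((n:ℝ≥0∞) * (∫⁻ a, qE a ∂x) * β^(n-1))
            ≤ β^n / 2 := by
          have hq32 : (∫⁻ a, qE a ∂x) ≤ 32 := V1_le_32 hx
          have hkey : ENNReal.ofReal (b/(64*n)) * ((n:ℝ≥0∞) * 32) = ENNReal.ofReal (b/2) := by
            rw [show ((n:ℝ≥0∞)) = ENNReal.ofReal n from (ENNReal.ofReal_natCast n).symm,
              show (32:ℝ≥0∞) = ENNReal.ofReal 32 from by norm_num,
              ← ENNReal.ofReal_mul (by positivity), ← ENNReal.ofReal_mul (by positivity)]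
            congr 1
            field_simp
            ring
          have hpow : β * β^(n-1) = β^n := by
            rw [← pow_succ', show n - 1 + 1 = n from by omega]
          calc ENNReal.ofReal (b/(64*n)) * ((n:ℝ≥0∞) * (∫⁻ a, qE a ∂x) * β^(n-1))
              ≤ ENNReal.ofReal (b/(64*n)) * ((n:ℝ≥0∞) * 32 * β^(n-1)) := by
                gcongr
            _ = (ENNReal.ofReal (b/(64*n)) * ((n:ℝ≥0∞) * 32)) * β^(n-1) := by ring
            _ = ENNReal.ofReal (b/2) * β^(n-1) := by rw [hkey]
            _ = (β/2) * β^(n-1) := by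
                rw [hβb, ENNReal.ofReal_div_of_pos (by norm_num)]
                norm_num
            _ = β^n / 2 := by
                rw [div_eq_mul_inv, div_eq_mul_inv, ← hpow]
                ring
        calc ∫⁻ a in Sᶜ, bE a ∂μ
            ≤ ∫⁻ a in Sᶜ, ENNReal.ofReal (b/(64*n)) * qE a ∂μ :=
              setLIntegral_mono (measurable_const.mul measurable_qE) hpt
          _ ≤ ∫⁻ a, ENNReal.ofReal (b/(64*n)) * qE a ∂μ := setLIntegral_le_lintegral _ _
          _ = ENNReal.ofReal (b/(64*n)) * ∫⁻ a, qE a ∂μ :=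
              lintegral_const_mul _ measurable_qE
          _ ≤ ENNReal.ofReal (b/(64*n)) * ((n:ℝ≥0∞) * (∫⁻ a, qE a ∂x) * β^(n-1)) := by
              gcongr
              exact A_bound x hx n
          _ ≤ β^n / 2 := hcontrol
      -- hence `S` holds at least half of `β^n`
      have hhalffin : β^n / 2 ≠ ∞ :=
        (ENNReal.div_lt_top (ENNReal.pow_ne_top hβfin) (by norm_num)).ne
      have hmain : β^n / 2 ≤ ∫⁻ a in S, bE a ∂μ := by
        have hsplit := lintegral_add_compl (fun a => bE a) hSm (μ := μ)
        have h1 : β^n ≤ (∫⁻ a in S, bE a ∂μ) + β^n/2 := by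
          conv_lhs => rw [← hβn, ← hsplit]
          exact add_le_add le_rfl hSc
        have h2 : β^n/2 + β^n/2 ≤ (∫⁻ a in S, bE a ∂μ) + β^n/2 := by
          rw [ENNReal.add_halves]; exact h1
        exact (ENNReal.add_le_add_iff_right hhalffin).mp h2
      -- pointwise lower bound on `S`
      have hptS : ∀ a ∈ S, ENNReal.ofReal (Real.exp (-(T n)/2)) * bE a ≤ hE a := by
        rintro a ⟨ht, hb2, habs⟩
        have hcoe : ((a.toReal : ℝ) : EReal) = a := EReal.coe_toReal ht hb2
        rw [← hcoe]
        simp only [bE, hE, bFn_coe, entFn_coe]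
        rw [← ENNReal.ofReal_mul (Real.exp_nonneg _)]
        exact ENNReal.ofReal_le_ofReal (entFn_ge (T n) a.toReal habs)
      calc ENNReal.ofReal (Real.exp (-(T n)/2) * (b^n/2))
          = ENNReal.ofReal (Real.exp (-(T n)/2)) * (β^n/2) := by
            rw [ENNReal.ofReal_mul (Real.exp_nonneg _)]
            congr 1
            rw [hβb, ENNReal.ofReal_div_of_pos (by norm_num),
              ENNReal.ofReal_pow hbpos.le]
            norm_num
        _ ≤ ENNReal.ofReal (Real.exp (-(T n)/2)) * ∫⁻ a in S, bE a ∂μ := by gcongr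
        _ = ∫⁻ a in S, ENNReal.ofReal (Real.exp (-(T n)/2)) * bE a ∂μ :=
            (lintegral_const_mul _ measurable_bE).symm
        _ ≤ ∫⁻ a in S, hE a ∂μ := setLIntegral_mono measurable_hE hptS
        _ ≤ ∫⁻ a, hE a ∂μ := setLIntegral_le_lintegral _ _
    -- real-valued bounds
    have hfin : ∀ n : ℕ, (∫⁻ a, hE a ∂(vpow x n)) ≠ ∞ := by
      intro n
      exact (lt_of_le_of_lt (hE_lint_le x n)
        (ENNReal.mul_ne_top (by norm_num) (ENNReal.pow_ne_top hβfin)).lt_top).ne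
    have hHup : ∀ n : ℕ, Hent (vpow x n) ≤ 3 * b^n := by
      intro n
      rw [Hent_eq_lint]
      have h3 : (3:ℝ≥0∞) * β^n = ENNReal.ofReal (3*b^n) := by
        rw [show (3:ℝ≥0∞) = ENNReal.ofReal 3 from by norm_num, hβb,
          ← ENNReal.ofReal_pow hbpos.le, ← ENNReal.ofReal_mul (by norm_num)]
      have h4 := ENNReal.toReal_mono (by rw [h3]; exact ENNReal.ofReal_ne_top)
        (hE_lint_le x n)
      rwa [h3, ENNReal.toReal_ofReal (by positivity)] at h4
    have hHlo : ∀ n : ℕ, 1 ≤ n →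
        Real.exp (-(T n)/2) * (b^n/2) ≤ Hent (vpow x n) := by
      intro n hn
      rw [Hent_eq_lint]
      have h5 := ENNReal.toReal_mono (hfin n) (hlow n hn)
      rwa [ENNReal.toReal_ofReal (by positivity)] at h5
    -- squeeze
    rw [hB]
    set c1 : ℝ := Real.sqrt (64 / b) with hc1
    have hTsplit : ∀ n : ℕ, T n = c1 * Real.sqrt n := by
      intro n
      simp only [hTdef, hc1]
      rw [show 64 * (n:ℝ) / b = (64/b) * n from by ring,
        Real.sqrt_mul (by positivity)]
    have hlo_t : Tendsto (fun n : ℕ =>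
        Real.log b + ((-c1/2) * (Real.sqrt n / n) + (-Real.log 2) * (1/n)))
        atTop (nhds (Real.log b)) := by
      have hc : Tendsto (fun _ : ℕ => Real.log b) atTop (nhds (Real.log b)) :=
        tendsto_const_nhds
      have h6 := hc.add
        ((sqrt_div_nat_tendsto.const_mul (-c1/2)).add
          (tendsto_one_div_atTop_nhds_zero_nat.const_mul (-Real.log 2)))
      simpa using h6
    have hup_t : Tendsto (fun n : ℕ => Real.log b + Real.log 3 * (1/n))
        atTop (nhds (Real.log b)) := by
      have hc : Tendsto (fun _ : ℕ => Real.log b) atTop (nhds (Real.log b)) :=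
        tendsto_const_nhds
      have h7 := hc.add
        (tendsto_one_div_atTop_nhds_zero_nat.const_mul (Real.log 3))
      simpa using h7
    apply tendsto_of_tendsto_of_tendsto_of_le_of_le' hlo_t hup_t
    · filter_upwards [eventually_ge_atTop 1] with n hn
      have hnR : (0:ℝ) < n := by exact_mod_cast hn
      have hHl := hHlo n hn
      have hpos : (0:ℝ) < Real.exp (-(T n)/2) * (b^n/2) := by positivity
      have hlog : -(T n)/2 + ((n:ℝ) * Real.log b - Real.log 2)
          ≤ Real.log (Hent (vpow x n)) := by
        have h8 := Real.log_le_log hpos hHl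
        rw [Real.log_mul (by positivity) (by positivity), Real.log_exp,
          Real.log_div (by positivity) (by norm_num), Real.log_pow] at h8
        push_cast at h8
        linarith
      calc Real.log b + ((-c1/2) * (Real.sqrt n / n) + (-Real.log 2) * (1/n))
          = (1/(n:ℝ)) * (-(T n)/2 + ((n:ℝ) * Real.log b - Real.log 2)) := by
            rw [hTsplit n]
            field_simp
            ring
        _ ≤ (1/(n:ℝ)) * Real.log (Hent (vpow x n)) :=
            mul_le_mul_of_nonneg_left hlog (by positivity)
    · filter_upwards [eventually_ge_atTop 1] with n hn
      have hnR : (0:ℝ) < n := by exact_mod_cast hn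
      have hHl := hHlo n hn
      have hpos : (0:ℝ) < Hent (vpow x n) := lt_of_lt_of_le (by positivity) hHl
      have hlog : Real.log (Hent (vpow x n)) ≤ Real.log 3 + (n:ℝ) * Real.log b := by
        have h9 := Real.log_le_log hpos (hHup n)
        rw [Real.log_mul (by norm_num) (by positivity), Real.log_pow] at h9
        push_cast at h9
        linarith
      calc (1/(n:ℝ)) * Real.log (Hent (vpow x n))
          ≤ (1/(n:ℝ)) * (Real.log 3 + (n:ℝ) * Real.log b) :=
            mul_le_mul_of_nonneg_left hlog (by positivity)
        _ = Real.log b + Real.log 3 * (1/(n:ℝ)) := by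
            field_simp
            ring
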